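/- arXiv:1807.00027 — 4 statements merged into one kernel-verified Lean document; each statement's English description precedes it below -/
import Mathlib

section
/- Let P and Q be Borel probability measures on a finite product X = ∏_{i=1}^n X_i of separable complete metric spaces, where Q has product form Q = ∏_{i=1}^n Q_i. For S ⊂ {1,…,n}, let P_S and Q_S denote the marginal distributions of P and Q on X_S = ∏_{i∈S} X_i (the pushforwards under the coordinate projection π_S). Then for any collection 𝒞 of distinct subsets of {1,…,n}, with r := max_{i∈[n]} #{S ∈ 𝒞 : i ∈ S}, one has Σ_{S∈𝒞} D(P_S ‖ Q_S) ≤ r · D(P ‖ Q). -/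
open MeasureTheory ProbabilityTheory ENNReal

open scoped Classical in
/-- The relative entropy (Kullback–Leibler divergence) `D(P‖Q) = ∫ log (dP/dQ) dP`,
with value `+∞` when `P` is not absolutely continuous w.r.t. `Q` or the integral diverges. -/
noncomputable def relEntropy {α : Type*} [MeasurableSpace α] (P Q : Measure α) : ℝ≥0∞ :=
  if P ≪ Q ∧ Integrable (llr P Q) P then ENNReal.ofReal (∫ x, llr P Q x ∂P) else ⊤

/-!
Gibbs' inequality gives `∫ log h dP ≤ D(P‖Q)` for every density `h` with `∫ h dQ ≤ 1`.
Take `h = ∏_{S ∈ 𝒞} (dP_S/dQ_S ∘ π_S)^(1/r)`: then `∫ log h dP = (1/r) ∑_S D(P_S‖Q_S)`, and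
since every coordinate lies in at most `r` of the sets, Finner's inequality for the product
measure `Q` bounds `∫ h dQ` by `∏_S (∫ dP_S/dQ_S dQ_S)^(1/r) ≤ 1`. Finner's inequality itself
follows by integrating out one coordinate at a time, applying Hölder's inequality with total
exponent at most one to the factors that involve that coordinate.
-/

open InformationTheory

theorem relEntropy_eq_klDiv {α : Type*} [MeasurableSpace α] (μ ν : Measure α)
    [IsProbabilityMeasure μ] [IsProbabilityMeasure ν] : relEntropy μ ν = klDiv μ ν := by
  simp only [relEntropy, klDiv_def, probReal_univ, add_sub_cancel_right]

theorem MeasureTheory.IsProbabilityMeasure.eq_of_subsingleton {α : Type*} [MeasurableSpace α]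
    [Subsingleton α] (μ ν : Measure α) [IsProbabilityMeasure μ] [IsProbabilityMeasure ν] :
    μ = ν := by
  ext s
  rcases s.eq_empty_or_nonempty with rfl | hs
  · simp
  · simp [Subsingleton.eq_univ_of_nonempty hs]

theorem integral_log_le_integral_llr {α : Type*} [MeasurableSpace α] {P Q : Measure α}
    [IsProbabilityMeasure P] [SigmaFinite Q] (hac : P ≪ Q) (hint : Integrable (llr P Q) P)
    {h : α → ℝ≥0∞} (hm : Measurable h) (hpos : ∀ᵐ x ∂P, 0 < h x)
    (hlog : Integrable (fun x => Real.log (h x).toReal) P) (h_le : ∫⁻ x, h x ∂Q ≤ 1) :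
    ∫ x, Real.log (h x).toReal ∂P ≤ ∫ x, llr P Q x ∂P := by
  set w : α → ℝ≥0∞ := fun x => h x / P.rnDeriv Q x
  have hwm : Measurable w := hm.div (Measure.measurable_rnDeriv P Q)
  have hw_le : ∫⁻ x, w x ∂P ≤ 1 :=
    calc ∫⁻ x, w x ∂P = ∫⁻ x, P.rnDeriv Q x * w x ∂Q :=
          (lintegral_rnDeriv_mul hac hwm.aemeasurable).symm
      _ ≤ ∫⁻ x, h x ∂Q := lintegral_mono fun x => ENNReal.mul_div_le
      _ ≤ 1 := h_le
  have hw_ne_top : ∫⁻ x, w x ∂P ≠ ⊤ := (hw_le.trans_lt one_lt_top).ne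
  have hw_int : Integrable (fun x => (w x).toReal) P :=
    integrable_toReal_of_lintegral_ne_top hwm.aemeasurable hw_ne_top
  have hw_integral : ∫ x, (w x).toReal ∂P ≤ 1 := by
    rw [integral_toReal hwm.aemeasurable (ae_lt_top hwm hw_ne_top)]
    exact toReal_le_of_le_ofReal zero_le_one (by simpa using hw_le)
  have h_lt_top : ∀ᵐ x ∂P, h x < ⊤ := hac.ae_le (ae_lt_top hm (h_le.trans_lt one_lt_top).ne)
  -- `log t ≤ t - 1` at `t = h / (dP/dQ)`
  have hpt : ∀ᵐ x ∂P, Real.log (h x).toReal - llr P Q x ≤ (w x).toReal - 1 := by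
    filter_upwards [hpos, h_lt_top, Measure.rnDeriv_pos hac,
      hac.ae_le (Measure.rnDeriv_lt_top P Q)] with x h0 htop ρ0 ρtop
    rw [llr, ← Real.log_div (toReal_pos h0.ne' htop.ne).ne' (toReal_pos ρ0.ne' ρtop.ne).ne',
      ← toReal_div]
    exact Real.log_le_sub_one_of_pos (toReal_pos (ENNReal.div_pos h0.ne' ρtop.ne).ne'
      (ENNReal.div_lt_top htop.ne ρ0.ne').ne)
  have key : ∫ x, (Real.log (h x).toReal - llr P Q x) ∂P ≤ ∫ x, ((w x).toReal - 1) ∂P :=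
    integral_mono_ae (hlog.sub hint) (hw_int.sub (integrable_const 1)) hpt
  rw [integral_sub hlog hint, integral_sub hw_int (integrable_const 1)] at key
  simp only [integral_const, probReal_univ, smul_eq_mul, mul_one] at key
  linarith

theorem sum_mul_integral_llr_map_le {α κ : Type*} {β : κ → Type*} [MeasurableSpace α]
    [∀ k, MeasurableSpace (β k)] {P Q : Measure α} [IsProbabilityMeasure P] [IsFiniteMeasure Q]
    (hac : P ≪ Q) (hint : Integrable (llr P Q) P) (s : Finset κ) {f : ∀ k, α → β k}
    (hf : ∀ k, Measurable (f k)) {p : κ → ℝ}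
    (h_le : ∫⁻ x, ∏ k ∈ s, (P.map (f k)).rnDeriv (Q.map (f k)) (f k x) ^ p k ∂Q ≤ 1) :
    ∑ k ∈ s, p k * ∫ y, llr (P.map (f k)) (Q.map (f k)) y ∂(P.map (f k)) ≤
      ∫ x, llr P Q x ∂P := by
  set ρ : ∀ k, β k → ℝ≥0∞ := fun k => (P.map (f k)).rnDeriv (Q.map (f k))
  have hρ : ∀ᵐ x ∂P, ∀ k ∈ s, 0 < ρ k (f k x) ∧ ρ k (f k x) < ⊤ :=
    (Filter.eventually_all_finset s).2 fun k _ => ae_of_ae_map (hf k).aemeasurable <|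
      (Measure.rnDeriv_pos (hac.map (hf k))).and
        ((hac.map (hf k)).ae_le (Measure.rnDeriv_lt_top _ _))
  have hlog_eq : (fun x => Real.log (∏ k ∈ s, ρ k (f k x) ^ p k).toReal) =ᵐ[P]
      fun x => ∑ k ∈ s, p k * llr (P.map (f k)) (Q.map (f k)) (f k x) := by
    filter_upwards [hρ] with x hx
    have hpos : ∀ k ∈ s, 0 < (ρ k (f k x)).toReal := fun k hk =>
      toReal_pos (hx k hk).1.ne' (hx k hk).2.ne
    rw [toReal_prod, Real.log_prod fun k hk => by
      rw [← toReal_rpow]; exact (Real.rpow_pos_of_pos (hpos k hk) _).ne']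
    refine Finset.sum_congr rfl fun k hk => ?_
    rw [← toReal_rpow, Real.log_rpow (hpos k hk), llr]
  have hint_map : ∀ k, Integrable (fun x => p k * llr (P.map (f k)) (Q.map (f k)) (f k x)) P :=
    fun k => ((integrable_llr_map hac (hf k) hint).comp_measurable (hf k)).const_mul _
  have hgibbs := integral_log_le_integral_llr hac hint (h := fun x => ∏ k ∈ s, ρ k (f k x) ^ p k)
    (Finset.measurable_prod _ fun k _ =>
      ((Measure.measurable_rnDeriv _ _).comp (hf k)).pow_const _)
    (hρ.mono fun x hx => pos_iff_ne_zero.2 <| Finset.prod_ne_zero_iff.2 fun k hk =>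
      (ENNReal.rpow_pos (hx k hk).1 (hx k hk).2.ne).ne')
    ((integrable_finsetSum _ fun k _ => hint_map k).congr hlog_eq.symm) h_le
  rw [integral_congr_ae hlog_eq, integral_finsetSum _ fun k _ => hint_map k] at hgibbs
  refine le_of_eq_of_le (Finset.sum_congr rfl fun k _ => ?_) hgibbs
  rw [integral_const_mul,
    integral_map (hf k).aemeasurable (measurable_llr _ _).aestronglyMeasurable]

theorem ENNReal.lintegral_prod_rpow_le_of_sum_le_one {α κ : Type*} [MeasurableSpace α]
    {μ : Measure α} [IsProbabilityMeasure μ] (s : Finset κ) {f : κ → α → ℝ≥0∞}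
    (hf : ∀ k ∈ s, AEMeasurable (f k) μ) {p : κ → ℝ} (hp : ∀ k ∈ s, 0 ≤ p k)
    (hp_sum : ∑ k ∈ s, p k ≤ 1) :
    ∫⁻ a, ∏ k ∈ s, f k a ^ p k ∂μ ≤ ∏ k ∈ s, (∫⁻ a, f k a ∂μ) ^ p k := by
  simpa using ENNReal.lintegral_mul_prod_norm_pow_le (g := fun _ => 1) s aemeasurable_const hf
    (1 - ∑ k ∈ s, p k) (by ring) (by linarith) hp

section Finner

open Finset Function

variable {ι : Type*} [DecidableEq ι] {X : ι → Type*} [∀ i, MeasurableSpace (X i)]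
  {𝒞 : Finset (Finset ι)} {F : Finset ι → (∀ i, X i) → ℝ≥0∞} {p : Finset ι → ℝ}

theorem lintegral_prod_rpow_update_le {j : ι} (μ : Measure (X j)) [IsProbabilityMeasure μ]
    (hFm : ∀ S ∈ 𝒞, Measurable (F S)) (hF : ∀ S ∈ 𝒞, DependsOn (F S) S)
    (hp : ∀ S ∈ 𝒞, 0 ≤ p S) (hpj : ∑ S ∈ 𝒞 with j ∈ S, p S ≤ 1) (x : ∀ i, X i) :
    ∫⁻ y, ∏ S ∈ 𝒞, F S (update x j y) ^ p S ∂μ ≤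
      ∏ S ∈ 𝒞, (∫⁻ y, F S (update x j y) ∂μ) ^ p S := by
  have hconst : ∀ S ∈ 𝒞.filter (j ∉ ·), ∀ y, F S (update x j y) = F S x := by
    intro S hS y
    rw [mem_filter] at hS
    exact hF S hS.1 fun i hi => update_of_ne (ne_of_mem_of_not_mem hi hS.2) y x
  have hmeas : ∀ S ∈ 𝒞.filter (j ∈ ·), Measurable fun y => F S (update x j y) :=
    fun S hS => (hFm S (mem_filter.1 hS).1).comp (measurable_update x)
  simp_rw [← prod_filter_mul_prod_filter_not 𝒞 (j ∈ ·)]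
  calc ∫⁻ y, (∏ S ∈ 𝒞 with j ∈ S, F S (update x j y) ^ p S) *
          ∏ S ∈ 𝒞 with j ∉ S, F S (update x j y) ^ p S ∂μ
      = (∫⁻ y, ∏ S ∈ 𝒞 with j ∈ S, F S (update x j y) ^ p S ∂μ) *
          ∏ S ∈ 𝒞 with j ∉ S, F S x ^ p S := by
        rw [← lintegral_mul_const _
          (Finset.measurable_prod _ fun S hS => (hmeas S hS).pow_const _)]
        refine lintegral_congr fun y => congrArg _ (prod_congr rfl fun S hS => ?_)
        rw [hconst S hS y]
    _ ≤ (∏ S ∈ 𝒞 with j ∈ S, (∫⁻ y, F S (update x j y) ∂μ) ^ p S) *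
          ∏ S ∈ 𝒞 with j ∉ S, F S x ^ p S := by
        gcongr
        exact ENNReal.lintegral_prod_rpow_le_of_sum_le_one _
          (fun S hS => (hmeas S hS).aemeasurable) (fun S hS => hp S (mem_filter.1 hS).1) hpj
    _ = _ := by
        congr 1
        refine prod_congr rfl fun S hS => ?_
        simp [hconst S hS]

theorem lmarginal_prod_rpow_le (Q : ∀ i, Measure (X i)) [∀ i, IsProbabilityMeasure (Q i)]
    (hp : ∀ S ∈ 𝒞, 0 ≤ p S) (hp_cover : ∀ i, ∑ S ∈ 𝒞 with i ∈ S, p S ≤ 1) (T : Finset ι)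
    (hFm : ∀ S ∈ 𝒞, Measurable (F S)) (hF : ∀ S ∈ 𝒞, DependsOn (F S) S) :
    ∫⋯∫⁻_T, (fun x => ∏ S ∈ 𝒞, F S x ^ p S) ∂Q ≤
      fun x => ∏ S ∈ 𝒞, (∫⋯∫⁻_T, F S ∂Q) x ^ p S := by
  induction T using Finset.induction_on generalizing F with
  | empty => simp
  | @insert j T hj ih =>
    set G : Finset ι → (∀ i, X i) → ℝ≥0∞ := fun S x => ∫⁻ y, F S (update x j y) ∂Q j
    have hGm : ∀ S ∈ 𝒞, Measurable (G S) := fun S hS =>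
      ((hFm S hS).comp measurable_update').lintegral_prod_right'
    have hG : ∀ S ∈ 𝒞, DependsOn (G S) S := fun S hS x x' hxx' =>
      lintegral_congr fun y => ((hF S hS).update j y).mono (by simp) hxx'
    intro x
    rw [lmarginal_insert' _ (Finset.measurable_prod _ fun S hS => (hFm S hS).pow_const _) hj]
    calc (∫⋯∫⁻_T, (fun x => ∫⁻ y, ∏ S ∈ 𝒞, F S (update x j y) ^ p S ∂Q j) ∂Q) x
        ≤ (∫⋯∫⁻_T, (fun x => ∏ S ∈ 𝒞, G S x ^ p S) ∂Q) x :=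
          lmarginal_mono (lintegral_prod_rpow_update_le (Q j) hFm hF hp (hp_cover j)) x
      _ ≤ ∏ S ∈ 𝒞, (∫⋯∫⁻_T, G S ∂Q) x ^ p S := ih hGm hG x
      _ = ∏ S ∈ 𝒞, (∫⋯∫⁻_insert j T, F S ∂Q) x ^ p S :=
          prod_congr rfl fun S hS => by rw [lmarginal_insert' _ (hFm S hS) hj]

/-- Finner's inequality. -/
theorem lintegral_pi_prod_rpow_le [Fintype ι] (Q : ∀ i, Measure (X i))
    [∀ i, IsProbabilityMeasure (Q i)]
    (hp : ∀ S ∈ 𝒞, 0 ≤ p S) (hp_cover : ∀ i, ∑ S ∈ 𝒞 with i ∈ S, p S ≤ 1)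
    (hFm : ∀ S ∈ 𝒞, Measurable (F S)) (hF : ∀ S ∈ 𝒞, DependsOn (F S) S) :
    ∫⁻ x, ∏ S ∈ 𝒞, F S x ^ p S ∂Measure.pi Q ≤
      ∏ S ∈ 𝒞, (∫⁻ x, F S x ∂Measure.pi Q) ^ p S := by
  rcases isEmpty_or_nonempty (∀ i, X i) with h | ⟨⟨x⟩⟩
  · simp only [lintegral_of_isEmpty, zero_le]
  simpa only [lmarginal_univ] using lmarginal_prod_rpow_le Q hp hp_cover univ hFm hF x

end Finner

section Shearer

open Finset

variable {ι : Type*} [Fintype ι] [DecidableEq ι] {X : ι → Type*} [∀ i, MeasurableSpace (X i)]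
  {P : Measure (∀ i, X i)} [IsProbabilityMeasure P]
  {Q : ∀ i, Measure (X i)} [∀ i, IsProbabilityMeasure (Q i)] {𝒞 : Finset (Finset ι)}

instance isProbabilityMeasure_map_restrict (S : Finset ι) :
    IsProbabilityMeasure (P.map S.restrict) :=
  Measure.isProbabilityMeasure_map S.measurable_restrict.aemeasurable

theorem sum_mul_integral_llr_map_restrict_le {p : Finset ι → ℝ}
    (hp : ∀ S ∈ 𝒞, 0 ≤ p S) (hp_cover : ∀ i, ∑ S ∈ 𝒞 with i ∈ S, p S ≤ 1)
    (hac : P ≪ Measure.pi Q) (hint : Integrable (llr P (Measure.pi Q)) P) :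
    ∑ S ∈ 𝒞, p S * ∫ y, llr (P.map S.restrict) ((Measure.pi Q).map S.restrict) y
        ∂(P.map S.restrict) ≤
      ∫ x, llr P (Measure.pi Q) x ∂P := by
  refine sum_mul_integral_llr_map_le (β := fun S : Finset ι => ∀ i : S, X i) hac hint 𝒞
    measurable_restrict ?_
  calc ∫⁻ x, ∏ S ∈ 𝒞, (P.map S.restrict).rnDeriv ((Measure.pi Q).map S.restrict) (S.restrict x)
          ^ p S ∂Measure.pi Q
      ≤ ∏ S ∈ 𝒞, (∫⁻ x, (P.map S.restrict).rnDeriv ((Measure.pi Q).map S.restrict)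
          (S.restrict x) ∂Measure.pi Q) ^ p S :=
        lintegral_pi_prod_rpow_le Q hp hp_cover
          (fun S _ => (Measure.measurable_rnDeriv _ _).comp S.measurable_restrict)
          (fun S _ x y hxy => congrArg _ (dependsOn_restrict S hxy))
    _ ≤ 1 := by
        refine prod_le_one' fun S hS => ENNReal.rpow_le_one ?_ (hp S hS)
        rw [← lintegral_map (Measure.measurable_rnDeriv _ _) S.measurable_restrict]
        exact Measure.lintegral_rnDeriv_le.trans prob_le_one

theorem sum_klDiv_map_restrict_le {r : ℕ} (hr : ∀ i, #{S ∈ 𝒞 | i ∈ S} ≤ r) :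
    ∑ S ∈ 𝒞, klDiv (P.map S.restrict) ((Measure.pi Q).map S.restrict) ≤
      r * klDiv P (Measure.pi Q) := by
  rcases Nat.eq_zero_or_pos r with rfl | hr0
  · refine (sum_eq_zero fun S hS => ?_).trans_le bot_le
    obtain rfl : S = ∅ := eq_empty_of_forall_notMem fun i hi =>
      filter_eq_empty_iff.1 (card_eq_zero.1 (Nat.le_zero.1 (hr i))) hS hi
    rw [IsProbabilityMeasure.eq_of_subsingleton (P.map (∅ : Finset ι).restrict)
      ((Measure.pi Q).map (∅ : Finset ι).restrict), klDiv_self]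
  by_cases hD : klDiv P (Measure.pi Q) = ⊤
  · simp [hD, ENNReal.mul_top, hr0.ne']
  obtain ⟨hac, hint⟩ := klDiv_ne_top_iff.1 hD
  have hmarg_ne_top (S : Finset ι) :
      klDiv (P.map S.restrict) ((Measure.pi Q).map S.restrict) ≠ ⊤ :=
    ne_top_of_le_ne_top hD (klDiv_map_le _ _ S.measurable_restrict)
  rw [← ofReal_toReal (sum_ne_top.2 fun S _ => hmarg_ne_top S),
    ← ofReal_toReal (mul_ne_top (natCast_ne_top r) hD)]
  refine ofReal_le_ofReal ?_
  rw [toReal_sum fun S _ => hmarg_ne_top S, toReal_mul, toReal_natCast,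
    toReal_klDiv_of_measure_eq hac (by simp)]
  simp_rw [toReal_klDiv_of_measure_eq (hac.map (measurable_restrict _)) (by simp)]
  have hcover (i : ι) : ∑ S ∈ 𝒞 with i ∈ S, (r : ℝ)⁻¹ ≤ 1 := by
    rw [sum_const, nsmul_eq_mul, ← div_eq_mul_inv, div_le_one (by positivity)]
    exact_mod_cast hr i
  have h := sum_mul_integral_llr_map_restrict_le (fun _ _ => by positivity) hcover hac hint
  rw [← mul_sum] at h
  exact (inv_mul_le_iff₀ (by positivity)).1 h

end Shearer

theorem relEntropy_shearer_general {n : ℕ} {X : Fin n → Type*}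
    [∀ i, MeasurableSpace (X i)]
    (P : Measure (∀ i, X i)) [IsProbabilityMeasure P]
    (Q : ∀ i, Measure (X i)) [∀ i, IsProbabilityMeasure (Q i)]
    (𝒞 : Finset (Finset (Fin n))) (r : ℕ)
    (hr : r = ⨆ i : Fin n, (𝒞.filter fun S => i ∈ S).card) :
    ∑ S ∈ 𝒞,
        relEntropy (P.map fun x (i : S) => x i.1)
          ((Measure.pi Q).map fun x (i : S) => x i.1) ≤
      (r : ℝ≥0∞) * relEntropy P (Measure.pi Q) := by
  have hcover (i : Fin n) : (𝒞.filter fun S => i ∈ S).card ≤ r :=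
    hr ▸ le_ciSup (Set.finite_range fun i => (𝒞.filter fun S => i ∈ S).card).bddAbove i
  change ∑ S ∈ 𝒞, relEntropy (P.map S.restrict) ((Measure.pi Q).map S.restrict) ≤ _
  simp only [relEntropy_eq_klDiv]
  exact sum_klDiv_map_restrict_le hcover

/-- **Shearer's lemma for relative entropy.** Let `P, Q` be Borel probability measures on a
finite product `X = ∏ i, X i` of separable complete metric spaces, with `Q = ∏ i, Q i` of
product form. For any collection `𝒞` of distinct subsets of `{1,…,n}`, with
`r := max_i #{S ∈ 𝒞 : i ∈ S}`, the marginals satisfy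
`∑_{S ∈ 𝒞} D(P_S ‖ Q_S) ≤ r · D(P ‖ Q)`. -/
theorem relEntropy_shearer {n : ℕ} {X : Fin n → Type*}
    [∀ i, MeasurableSpace (X i)] [∀ i, MetricSpace (X i)] [∀ i, CompleteSpace (X i)]
    [∀ i, TopologicalSpace.SeparableSpace (X i)] [∀ i, BorelSpace (X i)]
    (P : Measure (∀ i, X i)) [IsProbabilityMeasure P]
    (Q : ∀ i, Measure (X i)) [∀ i, IsProbabilityMeasure (Q i)]
    (𝒞 : Finset (Finset (Fin n))) (r : ℕ)
    (hr : r = ⨆ i : Fin n, (𝒞.filter fun S => i ∈ S).card) :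
    ∑ S ∈ 𝒞,
        relEntropy (P.map fun x (i : S) => x i.1)
          ((Measure.pi Q).map fun x (i : S) => x i.1) ≤
      (r : ℝ≥0∞) * relEntropy P (Measure.pi Q) :=
  relEntropy_shearer_general P Q 𝒞 r hr
end

section
/- For any Borel probability measures μ, ν on ℝ^d, the Poincaré constant is subadditive under convolution: C_p(μ ⋆ ν) ≤ C_p(μ) + C_p(ν). -/
/-!
If `X ~ μ` and `Y ~ ν` are independent, the Efron–Stein inequality bounds `Var f(X + Y)` by
`E[Var_X f(X + Y)] + E[Var_Y f(X + Y)]`. Each conditional variance is the variance of a translate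
of `f` under `μ` (resp. `ν`), so the Poincaré inequality of that measure bounds it by `C` times the
integral of `|∇f|²` at the shifted point; integrating back over the other variable recovers
`∫ |∇f|² d(μ ⋆ ν)`.
-/

open MeasureTheory ProbabilityTheory ENNReal

/-- The Poincaré constant of a Borel probability measure on `ℝ^d`: the smallest constant `C`
such that `Var_μ(f) ≤ C ∫ |∇f|² dμ` for all locally Lipschitz `f : ℝ^d → ℝ`
(`+∞` if no finite constant works). -/
noncomputable def poincareConst {d : ℕ} (μ : Measure (EuclideanSpace ℝ (Fin d))) : ℝ≥0∞ :=
  sInf {C : ℝ≥0∞ | ∀ f : EuclideanSpace ℝ (Fin d) → ℝ, LocallyLipschitz f →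
    evariance f μ ≤ C * ∫⁻ x, ‖gradient f x‖₊ ^ 2 ∂μ}

section Variance

variable {Ω : Type*} [MeasurableSpace Ω] {μ : Measure Ω}
  {F : Type*} [NormedAddCommGroup F]

lemma lintegral_enorm_sq_eq_eLpNorm_sq (f : Ω → F) :
    ∫⁻ ω, ‖f ω‖ₑ ^ 2 ∂μ = eLpNorm f 2 μ ^ 2 := by
  simpa using (eLpNorm_nnreal_pow_eq_lintegral (f := f) (μ := μ) (p := 2) two_ne_zero).symm

lemma lintegral_enorm_sq_eq_top {f : Ω → F} (h : ¬MemLp f 2 μ)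
    (hf : AEStronglyMeasurable f μ) : ∫⁻ ω, ‖f ω‖ₑ ^ 2 ∂μ = ∞ := by
  rw [lintegral_enorm_sq_eq_eLpNorm_sq, top_le_iff.mp (not_lt.mp fun h' => h ⟨hf, h'⟩)]
  rfl

lemma evariance_map {Ω' : Type*} [MeasurableSpace Ω'] {μ : Measure Ω'} {X : Ω → ℝ}
    {Y : Ω' → Ω} (hX : AEMeasurable X (μ.map Y)) (hY : AEMeasurable Y μ) :
    evariance X (μ.map Y) = evariance (X ∘ Y) μ := by
  rw [evariance, evariance, lintegral_map' (by fun_prop) hY,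
    integral_map hY hX.aestronglyMeasurable]
  rfl

variable [NormedSpace ℝ F] [IsProbabilityMeasure μ]

lemma sq_enorm_integral_le_lintegral {f : Ω → F} (hf : AEStronglyMeasurable f μ) :
    ‖∫ ω, f ω ∂μ‖ₑ ^ 2 ≤ ∫⁻ ω, ‖f ω‖ₑ ^ 2 ∂μ := calc
  _ ≤ eLpNorm f 1 μ ^ 2 := by
    rw [eLpNorm_one_eq_lintegral_enorm]
    gcongr
    exact enorm_integral_le_lintegral_enorm f
  _ ≤ eLpNorm f 2 μ ^ 2 := by gcongr; exact eLpNorm_le_eLpNorm_of_exponent_le one_le_two hf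
  _ = _ := (lintegral_enorm_sq_eq_eLpNorm_sq f).symm

lemma sq_enorm_integral_sub_integral_le {f g : Ω → F} (hf : Integrable f μ)
    (hg : AEStronglyMeasurable g μ) :
    ‖∫ ω, f ω ∂μ - ∫ ω, g ω ∂μ‖ₑ ^ 2 ≤ ∫⁻ ω, ‖f ω - g ω‖ₑ ^ 2 ∂μ := by
  by_cases hgi : Integrable g μ
  · rw [← integral_sub hf hgi]
    exact sq_enorm_integral_le_lintegral (hf.1.sub hg)
  · have hfg : ¬MemLp (fun ω => f ω - g ω) 2 μ := fun h => hgi <| by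
      simpa [Pi.sub_def] using hf.sub (h.integrable one_le_two)
    rw [lintegral_enorm_sq_eq_top hfg (hf.1.sub hg)]
    exact le_top

lemma MeasureTheory.MemLp.lintegral_enorm_sub_sq {X : Ω → ℝ} (hX : MemLp X 2 μ) (c : ℝ) :
    ∫⁻ ω, ‖X ω - c‖ₑ ^ 2 ∂μ = evariance X μ + ‖μ[X] - c‖ₑ ^ 2 := by
  have hXc : MemLp (fun ω => X ω - c) 2 μ := hX.sub (memLp_const c)
  have hmean : μ[fun ω => X ω - c] = μ[X] - c := by
    simp [integral_sub (hX.integrable one_le_two) (integrable_const c)]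
  have hsplit : ∫ ω, (X ω - c) ^ 2 ∂μ = variance X μ + (μ[X] - c) ^ 2 := by
    rw [← variance_sub_const hX.1 c, variance_eq_sub hXc, hmean]
    simp
  simp_rw [Real.enorm_eq_ofReal_abs, ← ofReal_pow (abs_nonneg _), sq_abs]
  rw [← ofReal_integral_eq_lintegral_ofReal hXc.integrable_sq (ae_of_all _ fun _ => sq_nonneg _),
    hsplit, ofReal_add (variance_nonneg X μ) (sq_nonneg _), hX.ofReal_variance_eq]

lemma lintegral_enorm_sub_sq_le {X : Ω → ℝ} (hX : AEStronglyMeasurable X μ) (c : ℝ) :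
    ∫⁻ ω, ‖X ω - c‖ₑ ^ 2 ∂μ ≤ evariance X μ + ‖μ[X] - c‖ₑ ^ 2 := by
  by_cases hX2 : MemLp X 2 μ
  · exact (hX2.lintegral_enorm_sub_sq c).le
  · simp [evariance_eq_top hX hX2]

lemma evariance_le_lintegral_enorm_sub_sq {X : Ω → ℝ} (hX : AEStronglyMeasurable X μ) (c : ℝ) :
    evariance X μ ≤ ∫⁻ ω, ‖X ω - c‖ₑ ^ 2 ∂μ := by
  by_cases hX2 : MemLp X 2 μ
  · exact (hX2.lintegral_enorm_sub_sq c).ge.trans' le_self_add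
  · have hXc : ¬MemLp (fun ω => X ω - c) 2 μ := fun h => hX2 <| by
      simpa [Pi.add_def] using h.add (memLp_const c)
    rw [lintegral_enorm_sq_eq_top hXc (hX.sub aestronglyMeasurable_const)]
    exact le_top

end Variance

section EfronStein

variable {α β : Type*} [MeasurableSpace α] [MeasurableSpace β] {μ : Measure α} {ν : Measure β}
  [IsProbabilityMeasure μ] [IsProbabilityMeasure ν] {F : α × β → ℝ}

lemma measurable_evariance_prodMk_right (hF : Measurable F) :
    Measurable fun y => evariance (fun x => F (x, y)) μ :=
  have hmean : Measurable fun y => ∫ x, F (x, y) ∂μ :=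
    hF.stronglyMeasurable.integral_prod_left'.measurable
  ((hF.sub (hmean.comp measurable_snd)).enorm.pow_const 2).lintegral_prod_left'

theorem evariance_prod_le (hF : Measurable F) :
    evariance F (μ.prod ν) ≤
      ∫⁻ y, evariance (fun x => F (x, y)) μ ∂ν + ∫⁻ x, evariance (fun y => F (x, y)) ν ∂μ := by
  set m₁ : β → ℝ := fun y => ∫ x, F (x, y) ∂μ
  set m₂ : α → ℝ := fun x => ∫ y, F (x, y) ∂ν
  -- With this centring, `m₁ y - c = ∫ x, (F (x, y) - m₂ x) ∂μ`, which Jensen bounds by the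
  -- `ν`-variances of the other slices.
  set c := ∫ x, m₂ x ∂μ
  have hm₂ : Measurable m₂ := hF.stronglyMeasurable.integral_prod_right'.measurable
  have hA := measurable_evariance_prodMk_right (μ := μ) hF
  by_cases hA_top : ∫⁻ y, evariance (fun x => F (x, y)) μ ∂ν = ∞
  · simp [hA_top]
  have hslice : ∀ᵐ y ∂ν, Integrable (fun x => F (x, y)) μ :=
    (ae_lt_top hA hA_top).mono fun y hy =>
      ((evariance_lt_top_iff_memLp (hF.comp measurable_prodMk_right).aestronglyMeasurable).1
        hy).integrable one_le_two
  have hmean : ∫⁻ y, ‖m₁ y - c‖ₑ ^ 2 ∂ν ≤ ∫⁻ x, evariance (fun y => F (x, y)) ν ∂μ := calc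
    _ ≤ ∫⁻ y, ∫⁻ x, ‖F (x, y) - m₂ x‖ₑ ^ 2 ∂μ ∂ν :=
      lintegral_mono_ae <| hslice.mono fun y hy =>
        sq_enorm_integral_sub_integral_le hy hm₂.aestronglyMeasurable
    _ = _ := lintegral_lintegral_swap (by fun_prop)
  calc evariance F (μ.prod ν) ≤ ∫⁻ p, ‖F p - c‖ₑ ^ 2 ∂(μ.prod ν) :=
        evariance_le_lintegral_enorm_sub_sq hF.aestronglyMeasurable c
    _ = ∫⁻ y, ∫⁻ x, ‖F (x, y) - c‖ₑ ^ 2 ∂μ ∂ν :=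
        lintegral_prod_symm' _ ((hF.sub_const c).enorm.pow_const 2)
    _ ≤ ∫⁻ y, (evariance (fun x => F (x, y)) μ + ‖m₁ y - c‖ₑ ^ 2) ∂ν :=
        lintegral_mono fun y =>
          lintegral_enorm_sub_sq_le (hF.comp measurable_prodMk_right).aestronglyMeasurable c
    _ = ∫⁻ y, evariance (fun x => F (x, y)) μ ∂ν + ∫⁻ y, ‖m₁ y - c‖ₑ ^ 2 ∂ν :=
        lintegral_add_left hA _
    _ ≤ _ := by gcongr

end EfronStein

section Poincare

variable {E : Type*} [NormedAddCommGroup E] [InnerProductSpace ℝ E] [CompleteSpace E]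

lemma gradient_comp_add_right (f : E → ℝ) (a x : E) :
    gradient (fun z => f (z + a)) x = gradient f (x + a) := by
  simp only [gradient, fderiv_comp_add_right]

lemma gradient_comp_add_left (f : E → ℝ) (a x : E) :
    gradient (fun z => f (a + z)) x = gradient f (a + x) := by
  simp only [gradient, fderiv_comp_add_left]

variable [MeasurableSpace E] [BorelSpace E]

def PoincareInequality (μ : Measure E) (C : ℝ≥0∞) : Prop :=
  ∀ f : E → ℝ, LocallyLipschitz f → evariance f μ ≤ C * ∫⁻ x, ‖gradient f x‖₊ ^ 2 ∂μ

lemma measurable_gradient (f : E → ℝ) : Measurable (gradient f) :=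
  (InnerProductSpace.toDual ℝ E).symm.continuous.measurable.comp (measurable_fderiv ℝ f)

variable [SecondCountableTopology E] {μ ν : Measure E} [IsProbabilityMeasure μ]
  [IsProbabilityMeasure ν] {C₁ C₂ : ℝ≥0∞}

theorem PoincareInequality.conv (h₁ : PoincareInequality μ C₁) (h₂ : PoincareInequality ν C₂) :
    PoincareInequality (μ ∗ ν) (C₁ + C₂) := by
  intro f hf
  set G : E × E → ℝ≥0∞ := fun p => ‖gradient f (p.1 + p.2)‖₊ ^ 2
  have hG : Measurable G := by have := measurable_gradient f; fun_prop
  have h₁' (y : E) : evariance (fun x => f (x + y)) μ ≤ C₁ * ∫⁻ x, G (x, y) ∂μ := by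
    simpa only [gradient_comp_add_right] using
      h₁ (fun x => f (x + y)) (hf.comp (isometry_add_right y).lipschitz.locallyLipschitz)
  have h₂' (x : E) : evariance (fun y => f (x + y)) ν ≤ C₂ * ∫⁻ y, G (x, y) ∂ν := by
    simpa only [gradient_comp_add_left] using
      h₂ (fun y => f (x + y)) (hf.comp (isometry_add_left x).lipschitz.locallyLipschitz)
  calc evariance f (μ ∗ ν) = evariance (fun p : E × E => f (p.1 + p.2)) (μ.prod ν) :=
        evariance_map hf.continuous.aemeasurable measurable_add.aemeasurable
    _ ≤ ∫⁻ y, evariance (fun x => f (x + y)) μ ∂ν + ∫⁻ x, evariance (fun y => f (x + y)) ν ∂μ :=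
        evariance_prod_le (hf.continuous.measurable.comp measurable_add)
    _ ≤ ∫⁻ y, C₁ * ∫⁻ x, G (x, y) ∂μ ∂ν + ∫⁻ x, C₂ * ∫⁻ y, G (x, y) ∂ν ∂μ := by
        gcongr with y x
        exacts [h₁' y, h₂' x]
    _ = (C₁ + C₂) * ∫⁻ p, G p ∂(μ.prod ν) := by
        rw [lintegral_const_mul _ hG.lintegral_prod_left',
          lintegral_const_mul _ hG.lintegral_prod_right', ← lintegral_prod_symm' _ hG, ← lintegral_prod _ hG.aemeasurable, add_mul]
    _ = (C₁ + C₂) * ∫⁻ x, ‖gradient f x‖₊ ^ 2 ∂(μ ∗ ν) := by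
        rw [Measure.conv, lintegral_map (by have := measurable_gradient f; fun_prop) measurable_add]

end Poincare

lemma poincareConst_eq_sInf {d : ℕ} (μ : Measure (EuclideanSpace ℝ (Fin d))) :
    poincareConst μ = sInf {C | PoincareInequality μ C} :=
  rfl

/-- Subadditivity of the Poincaré constant under convolution:
`C_p(μ ⋆ ν) ≤ C_p(μ) + C_p(ν)`. -/
theorem poincareConst_conv_le {d : ℕ} (μ ν : Measure (EuclideanSpace ℝ (Fin d)))
    [IsProbabilityMeasure μ] [IsProbabilityMeasure ν] :
    poincareConst (μ ∗ ν) ≤ poincareConst μ + poincareConst ν := by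
  simp only [poincareConst_eq_sInf]
  rw [ENNReal.sInf_add]
  refine le_iInf₂ fun C₁ h₁ => ?_
  rw [ENNReal.add_sInf]
  exact le_iInf₂ fun C₂ h₂ => sInf_le (PoincareInequality.conv h₁ h₂)
end

section
/- Let μ be a centered probability measure on ℝ^d with finite second moments, finite best Poincaré constant C_p > 0, and σ² := sup_{|α|=1} Var_μ(x ↦ α·x) > 0. Let ε ∈ [0,1] and let f be a smooth function in W^{1,2}(μ) with ∫ f dμ = 0 and ∫ |f|² dμ ≥ (1 − ε²) C_p ∫ |∇f|² dμ. Then (∫|∇f|² dμ − Var_μ(∇f))^{1/2} · (√(C_p/σ²) − √(σ²/C_p)) ≤ (Var_μ(∇f))^{1/2} + ε √(C_p/σ²) (∫|∇f|² dμ)^{1/2}. -/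
open MeasureTheory ProbabilityTheory ENNReal Filter
open scoped RealInnerProductSpace Topology

private lemma sqrt_helper {A B X : ℝ} (hA : 0 ≤ A) (hB : 0 ≤ B)
    (h : ∀ t : ℝ, 0 < t → 2 * t * X ≤ A + t ^ 2 * B) :
    X ≤ Real.sqrt A * Real.sqrt B := by
  rcases le_or_gt X 0 with hX | hX
  · exact hX.trans (mul_nonneg (Real.sqrt_nonneg _) (Real.sqrt_nonneg _))
  rcases eq_or_lt_of_le hB with hB0 | hB0
  · exfalso
    have h1 := h ((A + 1) / (2 * X)) (by positivity)
    rw [← hB0] at h1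
    have h2 : 2 * ((A + 1) / (2 * X)) * X = A + 1 := by field_simp
    nlinarith [h1, h2]
  rcases eq_or_lt_of_le hA with hA0 | hA0
  · exfalso
    have h1 := h (X / B) (by positivity)
    rw [← hA0] at h1
    have h2 : (X / B) ^ 2 * B = X ^ 2 / B := by field_simp
    rw [h2] at h1
    have h3 : 0 < X ^ 2 / B := by positivity
    have h4 : 2 * (X / B) * X = 2 * (X ^ 2 / B) := by ring
    linarith [h1, h3, h4]
  · have hsB : 0 < Real.sqrt B := Real.sqrt_pos.mpr hB0
    have hsA : 0 < Real.sqrt A := Real.sqrt_pos.mpr hA0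
    have h1 := h (Real.sqrt A / Real.sqrt B) (by positivity)
    have hA' : Real.sqrt A * Real.sqrt A = A := Real.mul_self_sqrt hA
    have hB' : Real.sqrt B * Real.sqrt B = B := Real.mul_self_sqrt hB
    rw [div_pow] at h1
    have h2 : (Real.sqrt A ^ 2 / Real.sqrt B ^ 2) * B = A := by
      rw [sq, sq, hA', hB']; field_simp
    rw [h2] at h1
    have h3 : 2 * (Real.sqrt A / Real.sqrt B) * X = 2 * X * Real.sqrt A / Real.sqrt B := by ring
    rw [h3, div_le_iff₀ hsB] at h1
    nlinarith [h1, mul_pos hsA hsB, hX]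

variable {d : ℕ}

private lemma hasGradientAt_inner' (a x : EuclideanSpace ℝ (Fin d)) :
    HasGradientAt (fun y : EuclideanSpace ℝ (Fin d) => ⟪a, y⟫) a x := by
  have h := ((InnerProductSpace.toDual ℝ (EuclideanSpace ℝ (Fin d))) a).hasFDerivAt (x := x)
  rw [hasFDerivAt_iff_hasGradientAt] at h
  have he : (fun y : EuclideanSpace ℝ (Fin d) => ⟪a, y⟫)
      = ⇑((InnerProductSpace.toDual ℝ (EuclideanSpace ℝ (Fin d))) a) := by
    ext y; simp [InnerProductSpace.toDual_apply_apply]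
  rw [he]
  simpa using h

private lemma contDiff_inner' (a : EuclideanSpace ℝ (Fin d)) :
    ContDiff ℝ (⊤ : ℕ∞) (fun y : EuclideanSpace ℝ (Fin d) => ⟪a, y⟫) := by
  have he : (fun y : EuclideanSpace ℝ (Fin d) => ⟪a, y⟫)
      = ⇑((InnerProductSpace.toDual ℝ (EuclideanSpace ℝ (Fin d))) a) := by
    ext y; simp [InnerProductSpace.toDual_apply_apply]
  rw [he]
  exact ((InnerProductSpace.toDual ℝ (EuclideanSpace ℝ (Fin d))) a).contDiff

private lemma hasGradientAt_inner_sub_smooth (a : EuclideanSpace ℝ (Fin d)) (t : ℝ)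
    {f : EuclideanSpace ℝ (Fin d) → ℝ} (hf : ContDiff ℝ (⊤ : ℕ∞) f) (x : EuclideanSpace ℝ (Fin d)) :
    HasGradientAt (fun y => ⟪a, y⟫ - t * f y) (a - t • gradient f x) x := by
  have hfd : HasGradientAt f (gradient f x) x :=
    ((hf.differentiable (by simp)) x).hasGradientAt
  have h1 := (hasGradientAt_inner' a x).hasFDerivAt
  have h2 := hfd.hasFDerivAt
  have h3 := h1.sub (h2.const_mul t)
  rw [hasFDerivAt_iff_hasGradientAt] at h3
  convert h3 using 1
  · rfl
  apply (InnerProductSpace.toDual ℝ (EuclideanSpace ℝ (Fin d))).injective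
  simp

private lemma hasGradientAt_smooth_sub_inner {f : EuclideanSpace ℝ (Fin d) → ℝ}
    (hf : ContDiff ℝ (⊤ : ℕ∞) f) (s : ℝ) (a x : EuclideanSpace ℝ (Fin d)) :
    HasGradientAt (fun y => f y - s * ⟪a, y⟫) (gradient f x - s • a) x := by
  have hfd : HasGradientAt f (gradient f x) x :=
    ((hf.differentiable (by simp)) x).hasGradientAt
  have h1 := (hasGradientAt_inner' a x).hasFDerivAt
  have h2 := hfd.hasFDerivAt
  have h3 := h2.sub (h1.const_mul s)
  rw [hasFDerivAt_iff_hasGradientAt] at h3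
  convert h3 using 1
  · rfl
  apply (InnerProductSpace.toDual ℝ (EuclideanSpace ℝ (Fin d))).injective
  simp

private lemma continuous_gradient' {f : EuclideanSpace ℝ (Fin d) → ℝ} (hf : ContDiff ℝ (⊤ : ℕ∞) f) :
    Continuous (gradient f) := by
  have h : Continuous (fderiv ℝ f) := hf.continuous_fderiv (by simp)
  exact (LinearIsometryEquiv.continuous _).comp h

private lemma integrable_mul_L2 {X : Type*} [MeasurableSpace X] {μ : Measure X}
    {f g : X → ℝ} (hf : MemLp f 2 μ) (hg : MemLp g 2 μ) :
    Integrable (fun x => f x * g x) μ := by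
  have h : MemLp (f • g) 1 μ := MemLp.smul hg hf
  rw [memLp_one_iff_integrable] at h
  exact h

private lemma integral_sub_sq {X : Type*} [MeasurableSpace X] {μ : Measure X}
    {u w : X → ℝ} (hu : MemLp u 2 μ) (hw : MemLp w 2 μ) (s : ℝ) :
    ∫ x, (u x - s * w x) ^ 2 ∂μ = (∫ x, (u x) ^ 2 ∂μ) - 2 * s * (∫ x, u x * w x ∂μ)
      + s ^ 2 * ∫ x, (w x) ^ 2 ∂μ := by
  have h1 := hu.integrable_sq
  have h2 := hw.integrable_sq
  have h3 := integrable_mul_L2 hu hw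
  have key : ∀ x, (u x - s * w x) ^ 2
      = (u x) ^ 2 + ((-(2 * s)) * (u x * w x) + s ^ 2 * (w x) ^ 2) := fun x => by ring
  simp_rw [key]
  have h4 : Integrable (fun x => (-(2 * s)) * (u x * w x) + s ^ 2 * (w x) ^ 2) μ :=
    (h3.const_mul _).add (h2.const_mul _)
  rw [integral_add h1 h4, integral_add (h3.const_mul _) (h2.const_mul _),
    integral_const_mul, integral_const_mul]
  ring

private lemma integral_const_sub_smul_norm_sq {d : ℕ} {X : Type*} [MeasurableSpace X]
    {μ : Measure X} [IsProbabilityMeasure μ] {w : X → EuclideanSpace ℝ (Fin d)}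
    (hw2 : Integrable (fun x => ‖w x‖ ^ 2) μ) (hw1 : Integrable w μ)
    (a : EuclideanSpace ℝ (Fin d)) (t : ℝ) :
    ∫ x, ‖a - t • w x‖ ^ 2 ∂μ
      = ‖a‖ ^ 2 - 2 * t * ⟪a, ∫ x, w x ∂μ⟫ + t ^ 2 * ∫ x, ‖w x‖ ^ 2 ∂μ := by
  have h3 : Integrable (fun x => ⟪a, w x⟫) μ := hw1.const_inner a
  have key : ∀ x, ‖a - t • w x‖ ^ 2
      = ‖a‖ ^ 2 + ((-(2 * t)) * ⟪a, w x⟫ + t ^ 2 * ‖w x‖ ^ 2) := by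
    intro x
    have := @norm_sub_sq_real (EuclideanSpace ℝ (Fin d)) _ _ a (t • w x)
    rw [real_inner_smul_right, norm_smul] at this
    rw [this]
    simp [mul_pow, sq_abs]
    ring
  simp_rw [key]
  have h4 : Integrable (fun x => (-(2 * t)) * ⟪a, w x⟫ + t ^ 2 * ‖w x‖ ^ 2) μ :=
    (h3.const_mul _).add (hw2.const_mul _)
  rw [integral_add (integrable_const _) h4, integral_add (h3.const_mul _) (hw2.const_mul _),
    integral_const_mul, integral_const_mul, integral_const, integral_inner hw1]
  simp
  ring

private lemma integral_smul_sub_const_norm_sq {d : ℕ} {X : Type*} [MeasurableSpace X]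
    {μ : Measure X} [IsProbabilityMeasure μ] {w : X → EuclideanSpace ℝ (Fin d)}
    (hw2 : Integrable (fun x => ‖w x‖ ^ 2) μ) (hw1 : Integrable w μ)
    (a : EuclideanSpace ℝ (Fin d)) :
    ∫ x, ‖w x - a‖ ^ 2 ∂μ
      = (∫ x, ‖w x‖ ^ 2 ∂μ) - 2 * ⟪a, ∫ x, w x ∂μ⟫ + ‖a‖ ^ 2 := by
  have h := integral_const_sub_smul_norm_sq hw2 hw1 a 1
  simp_rw [one_smul, one_pow, one_mul] at h
  calc ∫ x, ‖w x - a‖ ^ 2 ∂μ = ∫ x, ‖a - w x‖ ^ 2 ∂μ := by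
        congr 1; ext x; rw [norm_sub_rev]
    _ = (∫ x, ‖w x‖ ^ 2 ∂μ) - 2 * ⟪a, ∫ x, w x ∂μ⟫ + ‖a‖ ^ 2 := by rw [h]; ring

/-- `σ²(μ) := sup_{|α| = 1} Var_μ(x ↦ α·x)`, the largest variance of `μ` in any direction. -/
noncomputable def maxDirVar {d : ℕ} (μ : Measure (EuclideanSpace ℝ (Fin d))) : ℝ :=
  ⨆ α : {a : EuclideanSpace ℝ (Fin d) // ‖a‖ = 1},
    variance (fun x => ⟪(α : EuclideanSpace ℝ (Fin d)), x⟫) μ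

/-- The variance of a vector-valued function: `Var_μ(g) = ∫ |g|² dμ − |∫ g dμ|²`. -/
noncomputable def vecVar {d : ℕ} (μ : Measure (EuclideanSpace ℝ (Fin d)))
    (g : EuclideanSpace ℝ (Fin d) → EuclideanSpace ℝ (Fin d)) : ℝ :=
  (∫ x, ‖g x‖ ^ 2 ∂μ) - ‖∫ x, g x ∂μ‖ ^ 2

/-- `(h, g)` is an element of the Sobolev space `W^{1,2}(μ)`, defined as the closure of the
mean-zero smooth functions in `L²(μ)` with respect to the Sobolev norm
`‖f‖ = (∫ |∇f|² dμ + ∫ |f|² dμ)^{1/2}`. -/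
def MemW12 {d : ℕ} (μ : Measure (EuclideanSpace ℝ (Fin d)))
    (h : EuclideanSpace ℝ (Fin d) → ℝ) (g : EuclideanSpace ℝ (Fin d) → EuclideanSpace ℝ (Fin d)) :
    Prop :=
  ∃ φ : ℕ → EuclideanSpace ℝ (Fin d) → ℝ,
    (∀ k, ContDiff ℝ (⊤ : ℕ∞) (φ k)) ∧ (∀ k, ∫ x, φ k x ∂μ = 0) ∧
    Tendsto (fun k => ∫ x, (φ k x - h x) ^ 2 ∂μ) atTop (𝓝 0) ∧
    Tendsto (fun k => ∫ x, ‖gradient (φ k) x - g x‖ ^ 2 ∂μ) atTop (𝓝 0)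

private lemma poincare_real {d : ℕ} {μ : Measure (EuclideanSpace ℝ (Fin d))}
    [IsProbabilityMeasure μ] (hfin : poincareConst μ ≠ ⊤)
    (h : EuclideanSpace ℝ (Fin d) → ℝ) (hLip : LocallyLipschitz h)
    (hg : Integrable (fun x => ‖gradient h x‖ ^ 2) μ) :
    variance h μ ≤ (poincareConst μ).toReal * ∫ x, ‖gradient h x‖ ^ 2 ∂μ := by
  set S : Set ℝ≥0∞ := {C : ℝ≥0∞ | ∀ f : EuclideanSpace ℝ (Fin d) → ℝ, LocallyLipschitz f →
    evariance f μ ≤ C * ∫⁻ x, ‖gradient f x‖₊ ^ 2 ∂μ} with hSdef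
  have hS : S.Nonempty := by
    by_contra hemp
    rw [Set.not_nonempty_iff_eq_empty] at hemp
    apply hfin
    rw [poincareConst, ← hSdef, hemp, sInf_empty]
  have hI : (∫⁻ x, (‖gradient h x‖₊ : ℝ≥0∞) ^ 2 ∂μ)
      = ENNReal.ofReal (∫ x, ‖gradient h x‖ ^ 2 ∂μ) := by
    rw [MeasureTheory.ofReal_integral_eq_lintegral_ofReal hg
      (Eventually.of_forall fun x => by positivity)]
    congr 1
    ext x
    rw [← enorm_eq_nnnorm, ← ofReal_norm, ← ENNReal.ofReal_pow (norm_nonneg _)]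
  have hIne : (∫⁻ x, (‖gradient h x‖₊ : ℝ≥0∞) ^ 2 ∂μ) ≠ ⊤ := by
    rw [hI]; exact ENNReal.ofReal_ne_top
  have : Nonempty S := hS.to_subtype
  have key : evariance h μ ≤ poincareConst μ * ∫⁻ x, ‖gradient h x‖₊ ^ 2 ∂μ := by
    have heq : poincareConst μ * (∫⁻ x, ‖gradient h x‖₊ ^ 2 ∂μ)
        = ⨅ C : S, (C : ℝ≥0∞) * ∫⁻ x, ‖gradient h x‖₊ ^ 2 ∂μ := by
      rw [poincareConst, ← hSdef, sInf_eq_iInf']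
      exact ENNReal.iInf_mul (fun ha => absurd ha hIne)
    rw [heq]
    exact le_iInf fun C => C.2 h hLip
  have hPL : poincareConst μ * (∫⁻ x, ‖gradient h x‖₊ ^ 2 ∂μ) ≠ ⊤ :=
    ENNReal.mul_ne_top hfin hIne
  have h1 : variance h μ = (evariance h μ).toReal := rfl
  rw [h1]
  calc (evariance h μ).toReal
      ≤ (poincareConst μ * ∫⁻ x, ‖gradient h x‖₊ ^ 2 ∂μ).toReal :=
        ENNReal.toReal_mono hPL key
    _ = (poincareConst μ).toReal * ∫ x, ‖gradient h x‖ ^ 2 ∂μ := by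
        rw [ENNReal.toReal_mul, hI, ENNReal.toReal_ofReal (integral_nonneg fun x => by positivity)]

set_option maxHeartbeats 1000000 in
/-- **Gradient-variance bound for near-extremizers.** Let `μ` be a centered probability measure
on `ℝ^d` with finite second moments, finite best Poincaré constant `C_p > 0` and
`σ² := sup_{|α|=1} Var_μ(x ↦ α·x) > 0`. If `ε ∈ [0,1]` and `f` is a smooth mean-zero function
in `W^{1,2}(μ)` with `∫ |f|² dμ ≥ (1 − ε²) C_p ∫ |∇f|² dμ`, then
`(∫|∇f|² dμ − Var_μ(∇f))^{1/2} (√(C_p/σ²) − √(σ²/C_p))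
  ≤ (Var_μ(∇f))^{1/2} + ε √(C_p/σ²) (∫|∇f|² dμ)^{1/2}`. -/
theorem near_extremal_gradient_variance {d : ℕ} (μ : Measure (EuclideanSpace ℝ (Fin d)))
    [IsProbabilityMeasure μ] (h2 : Integrable (fun x => ‖x‖ ^ 2) μ)
    (hcen : (∫ x, x ∂μ) = 0)
    (hfin : poincareConst μ ≠ ⊤) (hpos : 0 < (poincareConst μ).toReal)
    (hσ : 0 < maxDirVar μ)
    (ε : ℝ) (hε : ε ∈ Set.Icc (0 : ℝ) 1)
    (f : EuclideanSpace ℝ (Fin d) → ℝ) (hf : ContDiff ℝ (⊤ : ℕ∞) f) (hf0 : ∫ x, f x ∂μ = 0)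
    (hfL2 : MemLp f 2 μ) (hgradL2 : MemLp (fun x => ‖gradient f x‖) 2 μ)
    (hnear : (1 - ε ^ 2) * (poincareConst μ).toReal * ∫ x, ‖gradient f x‖ ^ 2 ∂μ ≤
      ∫ x, (f x) ^ 2 ∂μ) :
    Real.sqrt ((∫ x, ‖gradient f x‖ ^ 2 ∂μ) - vecVar μ (gradient f)) *
        (Real.sqrt ((poincareConst μ).toReal / maxDirVar μ) -
          Real.sqrt (maxDirVar μ / (poincareConst μ).toReal)) ≤
      Real.sqrt (vecVar μ (gradient f)) +
        ε * Real.sqrt ((poincareConst μ).toReal / maxDirVar μ) *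
          Real.sqrt (∫ x, ‖gradient f x‖ ^ 2 ∂μ) := by
  obtain ⟨hε0, hε1⟩ := hε
  -- basic integrability facts
  have hgc : Continuous (gradient f) := continuous_gradient' hf
  have hgradMem : MemLp (gradient f) 2 μ := ⟨hgc.aestronglyMeasurable, by
    rw [← eLpNorm_norm]; exact hgradL2.2⟩
  have hgradInt : Integrable (gradient f) μ :=
    memLp_one_iff_integrable.mp (hgradMem.mono_exponent (by norm_num))
  have hGint : Integrable (fun x => ‖gradient f x‖ ^ 2) μ := hgradL2.integrable_sq
  have hfInt : Integrable f μ :=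
    memLp_one_iff_integrable.mp (hfL2.mono_exponent (by norm_num))
  have hxMem : MemLp (fun x : EuclideanSpace ℝ (Fin d) => x) 2 μ := by
    rw [memLp_two_iff_integrable_sq_norm continuous_id'.aestronglyMeasurable]
    simpa using h2
  have hxInt : Integrable (fun x : EuclideanSpace ℝ (Fin d) => x) μ :=
    memLp_one_iff_integrable.mp (hxMem.mono_exponent (by norm_num))
  -- abstract the main scalar quantities
  obtain ⟨C, hC⟩ : ∃ y, (poincareConst μ).toReal = y := ⟨_, rfl⟩
  obtain ⟨σ2, hσ2⟩ : ∃ y, maxDirVar μ = y := ⟨_, rfl⟩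
  obtain ⟨G, hG⟩ : ∃ y, (∫ x, ‖gradient f x‖ ^ 2 ∂μ) = y := ⟨_, rfl⟩
  obtain ⟨b, hb⟩ : ∃ y, (∫ x, gradient f x ∂μ) = y := ⟨_, rfl⟩
  obtain ⟨F2, hF2⟩ : ∃ y, (∫ x, (f x) ^ 2 ∂μ) = y := ⟨_, rfl⟩
  rw [hC] at hpos hnear ⊢
  rw [hσ2] at hσ ⊢
  rw [hG] at hnear ⊢
  rw [hF2] at hnear
  have hG0 : 0 ≤ G := hG ▸ integral_nonneg fun x => by positivity
  have hF20 : 0 ≤ F2 := hF2 ▸ integral_nonneg fun x => by positivity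
  have hvV : vecVar μ (gradient f) = G - ‖b‖ ^ 2 := by
    simp only [vecVar]
    rw [hG, hb]
  rw [hvV]
  have e0 : G - (G - ‖b‖ ^ 2) = ‖b‖ ^ 2 := by ring
  rw [e0, Real.sqrt_sq (norm_nonneg b)]
  -- identity : ∫ ‖∇f - b‖² = G - ‖b‖²
  have hVid : ∫ x, ‖gradient f x - b‖ ^ 2 ∂μ = G - ‖b‖ ^ 2 := by
    rw [integral_smul_sub_const_norm_sq hGint hgradInt b, hG, hb,
      real_inner_self_eq_norm_sq]
    ring
  have hVnn : 0 ≤ G - ‖b‖ ^ 2 := hVid ▸ integral_nonneg fun x => by positivity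
  -- facts about linear functionals
  have hlmean : ∀ a : EuclideanSpace ℝ (Fin d), ∫ x, ⟪a, x⟫ ∂μ = 0 := fun a => by
    rw [integral_inner hxInt, hcen, inner_zero_right]
  have hlgrad : ∀ a : EuclideanSpace ℝ (Fin d),
      gradient (fun x : EuclideanSpace ℝ (Fin d) => ⟪a, x⟫) = fun _ => a := fun a =>
    funext fun x => (hasGradientAt_inner' a x).gradient
  have hvar_eq : ∀ h : EuclideanSpace ℝ (Fin d) → ℝ, MemLp h 2 μ → (∫ x, h x ∂μ) = 0 →
      variance h μ = ∫ x, (h x) ^ 2 ∂μ := by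
    intro h hmem hmean
    rw [variance_eq_sub hmem, hmean]
    norm_num
  have hpoinc_l : ∀ a : EuclideanSpace ℝ (Fin d), ‖a‖ = 1 →
      variance (fun x => ⟪a, x⟫) μ ≤ C := by
    intro a ha
    have hLip : LocallyLipschitz (fun x : EuclideanSpace ℝ (Fin d) => ⟪a, x⟫) :=
      ((contDiff_inner' a).of_le (by simp)).locallyLipschitz
    have hgint : Integrable
        (fun x => ‖gradient (fun x : EuclideanSpace ℝ (Fin d) => ⟪a, x⟫) x‖ ^ 2) μ := by
      simp only [hlgrad a]
      exact integrable_const _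
    have hp := poincare_real hfin _ hLip hgint
    rw [hC] at hp
    simp only [hlgrad a] at hp
    rw [integral_const] at hp
    simpa [ha] using hp
  have hbdd : BddAbove (Set.range fun α : {a : EuclideanSpace ℝ (Fin d) // ‖a‖ = 1} =>
      variance (fun x => ⟪(α : EuclideanSpace ℝ (Fin d)), x⟫) μ) := by
    refine ⟨C, ?_⟩
    rintro y ⟨α, rfl⟩
    exact hpoinc_l α α.2
  by_cases hb0 : b = 0
  · rw [hb0, norm_zero, zero_mul]
    exact add_nonneg (Real.sqrt_nonneg _)
      (mul_nonneg (mul_nonneg hε0 (Real.sqrt_nonneg _)) (Real.sqrt_nonneg _))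
  -- main case
  have hnb : 0 < ‖b‖ := norm_pos_iff.mpr hb0
  obtain ⟨α, hαdef⟩ : ∃ y : EuclideanSpace ℝ (Fin d), ‖b‖⁻¹ • b = y := ⟨_, rfl⟩
  have hα1 : ‖α‖ = 1 := by
    rw [← hαdef, norm_smul, norm_inv, norm_norm, inv_mul_cancel₀ (ne_of_gt hnb)]
  have hαb : ⟪α, b⟫ = ‖b‖ := by
    rw [← hαdef, real_inner_smul_left, real_inner_self_eq_norm_sq, sq]
    field_simp
  have hsmulα : ‖b‖ • α = b := by
    rw [← hαdef, smul_smul, mul_inv_cancel₀ (ne_of_gt hnb), one_smul]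
  have hℓmem : MemLp (fun x : EuclideanSpace ℝ (Fin d) => ⟪α, x⟫) 2 μ := hxMem.const_inner α
  have hℓint : Integrable (fun x : EuclideanSpace ℝ (Fin d) => ⟪α, x⟫) μ := hxInt.const_inner α
  -- v, c
  obtain ⟨v, hv⟩ : ∃ y, (∫ x, (⟪α, x⟫ : ℝ) ^ 2 ∂μ) = y := ⟨_, rfl⟩
  obtain ⟨c, hc⟩ : ∃ y, (∫ x, f x * ⟪α, x⟫ ∂μ) = y := ⟨_, rfl⟩
  have hv0 : 0 ≤ v := hv ▸ integral_nonneg fun x => by positivity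
  have hvvar : variance (fun x => (⟪α, x⟫ : ℝ)) μ = v := by
    rw [hvar_eq _ hℓmem (hlmean α), hv]
  have hvσ : v ≤ σ2 := by
    rw [← hvvar, ← hσ2]
    exact le_ciSup hbdd (⟨α, hα1⟩ : {a : EuclideanSpace ℝ (Fin d) // ‖a‖ = 1})
  have hvC : v ≤ C := by rw [← hvvar]; exact hpoinc_l α hα1
  -- expansion for f - s·ℓ
  have h_exp : ∀ s : ℝ, ∫ x, (f x - s * ⟪α, x⟫) ^ 2 ∂μ = F2 - 2 * s * c + s ^ 2 * v := by
    intro s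
    rw [integral_sub_sq hfL2 hℓmem s, hF2, hc, hv]
  have hA1nn : 0 ≤ F2 - 2 * ‖b‖ * c + ‖b‖ ^ 2 * v := by
    rw [← h_exp ‖b‖]
    exact integral_nonneg fun x => by positivity
  have hCS : ∀ t : ℝ, 0 < t → 2 * t * (c - ‖b‖ * v)
      ≤ (F2 - 2 * ‖b‖ * c + ‖b‖ ^ 2 * v) + t ^ 2 * v := by
    intro t ht
    have h0 : 0 ≤ ∫ x, (f x - (‖b‖ + t) * ⟪α, x⟫) ^ 2 ∂μ :=
      integral_nonneg fun x => by positivity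
    rw [h_exp (‖b‖ + t)] at h0
    nlinarith [h0]
  have hX1 : c - ‖b‖ * v ≤ Real.sqrt (F2 - 2 * ‖b‖ * c + ‖b‖ ^ 2 * v) * Real.sqrt v :=
    sqrt_helper hA1nn hv0 hCS
  -- Poincaré applied to g = f - ‖b‖·ℓ
  have hgC2 : ContDiff ℝ (⊤ : ℕ∞) (fun x : EuclideanSpace ℝ (Fin d) => f x - ‖b‖ * ⟪α, x⟫) :=
    hf.sub (contDiff_const.mul (contDiff_inner' α))
  have hggrad : gradient (fun x : EuclideanSpace ℝ (Fin d) => f x - ‖b‖ * ⟪α, x⟫)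
      = fun x => gradient f x - b := funext fun x => by
    rw [(hasGradientAt_smooth_sub_inner hf ‖b‖ α x).gradient, hsmulα]
  have hgsubMem : MemLp (fun x => gradient f x - b) 2 μ := hgradMem.sub (memLp_const b)
  have hgint2 : Integrable
      (fun x => ‖gradient (fun x : EuclideanSpace ℝ (Fin d) => f x - ‖b‖ * ⟪α, x⟫) x‖ ^ 2) μ := by
    simp only [hggrad]
    exact hgsubMem.norm.integrable_sq
  have hgmem : MemLp (fun x : EuclideanSpace ℝ (Fin d) => f x - ‖b‖ * ⟪α, x⟫) 2 μ :=
    hfL2.sub (hℓmem.const_mul ‖b‖)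
  have hgmean : ∫ x, (f x - ‖b‖ * ⟪α, x⟫) ∂μ = 0 := by
    rw [integral_sub hfInt (hℓint.const_mul ‖b‖), integral_const_mul, hlmean α, hf0]
    ring
  have hPg := poincare_real hfin _ (hgC2.of_le (by simp)).locallyLipschitz hgint2
  rw [hvar_eq _ hgmem hgmean, h_exp ‖b‖, hC] at hPg
  simp only [hggrad] at hPg
  rw [hVid] at hPg
  -- key1
  have hsA1 : Real.sqrt (F2 - 2 * ‖b‖ * c + ‖b‖ ^ 2 * v)
      ≤ Real.sqrt C * Real.sqrt (G - ‖b‖ ^ 2) := by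
    rw [← Real.sqrt_mul (le_of_lt hpos)]
    exact Real.sqrt_le_sqrt hPg
  have key1 : c ≤ ‖b‖ * σ2 + Real.sqrt C * Real.sqrt (G - ‖b‖ ^ 2) * Real.sqrt σ2 := by
    have h1 : Real.sqrt (F2 - 2 * ‖b‖ * c + ‖b‖ ^ 2 * v) * Real.sqrt v
        ≤ (Real.sqrt C * Real.sqrt (G - ‖b‖ ^ 2)) * Real.sqrt σ2 := by
      apply mul_le_mul hsA1 (Real.sqrt_le_sqrt hvσ) (Real.sqrt_nonneg _)
      positivity
    have h2 : ‖b‖ * v ≤ ‖b‖ * σ2 := mul_le_mul_of_nonneg_left hvσ hnb.le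
    linarith [hX1]
  -- key2 : variational inequality
  have hvar_ineq : ∀ t : ℝ, 0 < t →
      v - 2 * t * c + t ^ 2 * F2 ≤ C * (1 - 2 * t * ‖b‖ + t ^ 2 * G) := by
    intro t ht
    have hhC : ContDiff ℝ (⊤ : ℕ∞) (fun x : EuclideanSpace ℝ (Fin d) => ⟪α, x⟫ - t * f x) :=
      (contDiff_inner' α).sub (contDiff_const.mul hf)
    have hhgrad : gradient (fun x : EuclideanSpace ℝ (Fin d) => ⟪α, x⟫ - t * f x)
        = fun x => α - t • gradient f x := funext fun x =>
      (hasGradientAt_inner_sub_smooth α t hf x).gradient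
    have hhMem : MemLp (fun x : EuclideanSpace ℝ (Fin d) => ⟪α, x⟫ - t * f x) 2 μ :=
      hℓmem.sub (hfL2.const_mul t)
    have hhmean : ∫ x, (⟪α, x⟫ - t * f x) ∂μ = 0 := by
      rw [integral_sub hℓint (hfInt.const_mul t), integral_const_mul, hlmean α, hf0]
      ring
    have hhint2 : Integrable
        (fun x => ‖gradient (fun x : EuclideanSpace ℝ (Fin d) => ⟪α, x⟫ - t * f x) x‖ ^ 2) μ := by
      simp only [hhgrad]
      exact ((memLp_const α).sub (hgradMem.const_smul t)).norm.integrable_sq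
    have hP := poincare_real hfin _ (hhC.of_le (by simp)).locallyLipschitz hhint2
    rw [hvar_eq _ hhMem hhmean, hC] at hP
    simp only [hhgrad] at hP
    rw [integral_const_sub_smul_norm_sq hGint hgradInt α t, hb, hG, hαb, hα1] at hP
    have hexp2 : ∫ x, (⟪α, x⟫ - t * f x) ^ 2 ∂μ = v - 2 * t * (∫ x, ⟪α, x⟫ * f x ∂μ)
        + t ^ 2 * F2 := by
      rw [integral_sub_sq hℓmem hfL2 t, hF2, hv]
    have hcc : (∫ x, (⟪α, x⟫ : ℝ) * f x ∂μ) = c := by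
      rw [← hc]
      exact integral_congr_ae (Eventually.of_forall fun x => mul_comm _ _)
    rw [hexp2, hcc] at hP
    calc v - 2 * t * c + t ^ 2 * F2 ≤ C * (1 ^ 2 - 2 * t * ‖b‖ + t ^ 2 * G) := hP
      _ = C * (1 - 2 * t * ‖b‖ + t ^ 2 * G) := by ring
  have hkey2hyp : ∀ t : ℝ, 0 < t →
      2 * t * (C * ‖b‖ - c) ≤ (C - v) + t ^ 2 * (ε ^ 2 * C * G) := by
    intro t ht
    have h1 := hvar_ineq t ht
    linarith [h1, mul_nonneg (sq_nonneg t) (sub_nonneg.mpr hnear)]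
  have hACv : 0 ≤ C - v := by linarith
  have hX2 : C * ‖b‖ - c ≤ Real.sqrt (C - v) * Real.sqrt (ε ^ 2 * C * G) :=
    sqrt_helper hACv (by positivity) hkey2hyp
  have key2 : C * ‖b‖ - c ≤ ε * C * Real.sqrt G := by
    have h1 : Real.sqrt (C - v) ≤ Real.sqrt C := Real.sqrt_le_sqrt (by linarith)
    have h2 : Real.sqrt (ε ^ 2 * C * G) = ε * (Real.sqrt C * Real.sqrt G) := by
      rw [show ε ^ 2 * C * G = ε ^ 2 * (C * G) by ring, Real.sqrt_mul (sq_nonneg ε),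
        Real.sqrt_sq hε0, Real.sqrt_mul (le_of_lt hpos)]
    have h3 : Real.sqrt C * Real.sqrt C = C := Real.mul_self_sqrt (le_of_lt hpos)
    calc C * ‖b‖ - c ≤ Real.sqrt (C - v) * Real.sqrt (ε ^ 2 * C * G) := hX2
      _ ≤ Real.sqrt C * Real.sqrt (ε ^ 2 * C * G) :=
          mul_le_mul_of_nonneg_right h1 (Real.sqrt_nonneg _)
      _ = ε * C * Real.sqrt G := by rw [h2]; linear_combination (ε * Real.sqrt G) * h3
  -- final assembly
  have hcomb : C * ‖b‖ ≤ σ2 * ‖b‖ + Real.sqrt C * Real.sqrt (G - ‖b‖ ^ 2) * Real.sqrt σ2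
      + ε * C * Real.sqrt G := by linarith [key1, key2]
  have hsC : 0 < Real.sqrt C := Real.sqrt_pos.mpr hpos
  have hsσ : 0 < Real.sqrt σ2 := Real.sqrt_pos.mpr hσ
  have hsC2 : Real.sqrt C * Real.sqrt C = C := Real.mul_self_sqrt (le_of_lt hpos)
  have hsσ2 : Real.sqrt σ2 * Real.sqrt σ2 = σ2 := Real.mul_self_sqrt (le_of_lt hσ)
  rw [Real.sqrt_div (le_of_lt hpos), Real.sqrt_div (le_of_lt hσ)]
  have eL : ‖b‖ * (Real.sqrt C / Real.sqrt σ2 - Real.sqrt σ2 / Real.sqrt C)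
      * (Real.sqrt σ2 * Real.sqrt C) = C * ‖b‖ - σ2 * ‖b‖ := by
    rw [← hsC2, ← hsσ2]
    field_simp
    rw [Real.sqrt_sq hsC.le, Real.sqrt_sq hsσ.le]
  have eR : (Real.sqrt (G - ‖b‖ ^ 2) + ε * (Real.sqrt C / Real.sqrt σ2) * Real.sqrt G)
      * (Real.sqrt σ2 * Real.sqrt C)
      = Real.sqrt σ2 * Real.sqrt C * Real.sqrt (G - ‖b‖ ^ 2) + ε * C * Real.sqrt G := by
    field_simp
    linear_combination (ε * Real.sqrt G) * hsC2
  have final : ‖b‖ * (Real.sqrt C / Real.sqrt σ2 - Real.sqrt σ2 / Real.sqrt C)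
      * (Real.sqrt σ2 * Real.sqrt C)
      ≤ (Real.sqrt (G - ‖b‖ ^ 2) + ε * (Real.sqrt C / Real.sqrt σ2) * Real.sqrt G)
        * (Real.sqrt σ2 * Real.sqrt C) := by
    rw [eL, eR]
    linarith [hcomb]
  exact le_of_mul_le_mul_right final (mul_pos hsσ hsC)
end

section
/- Define a real sequence (a_n)_{n≥0} by a_0 = 2 and a_{n+1} = −2 + √(9 + 6(a_n − 1)) for n ≥ 0 (equivalently, a_{n+1} is the positive root of a_{n+1} + (1/6)(a_{n+1} − 1)² = a_n). Then a_n ≤ 1 + 7/(n+7) for all n ≥ 0. -/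
/-!
The map `t ↦ -2 + √(9 + 6 (t - 1))` is monotone, so by induction it suffices that it sends
the bound `1 + 7/(x+7)` at step `x` below the bound `1 + 7/(x+8)` at step `x + 1`. Squaring,
this is `9 + 42/(x+7) ≤ (3 + 7/(x+8))²`, and the difference of the two sides is
`7(x+1) / ((x+8)²(x+7)) ≥ 0` for `x ≥ -1`.
-/

open Real

theorem sqrt_nine_add_le {x : ℝ} (hx : -1 ≤ x) :
    √(9 + 6 * (7 / (x + 7))) ≤ 3 + 7 / (x + 8) := by
  have hx7 : 0 < x + 7 := by linarith
  have hx8 : 0 < x + 8 := by linarith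
  have hgap : (3 + 7 / (x + 8)) ^ 2 - (9 + 6 * (7 / (x + 7))) =
      7 * (x + 1) / ((x + 8) ^ 2 * (x + 7)) := by
    field_simp
    ring
  have hgap_nonneg : 0 ≤ 7 * (x + 1) / ((x + 8) ^ 2 * (x + 7)) := by
    apply div_nonneg <;> nlinarith
  rw [sqrt_le_iff]
  exact ⟨by positivity, by linarith⟩

/-- The sequence `a_0 = 2`, `a_{n+1} = −2 + √(9 + 6(a_n − 1))` (so that `a_{n+1}` is the
positive root of `a_{n+1} + (1/6)(a_{n+1} − 1)² = a_n`) satisfies `a_n ≤ 1 + 7/(n+7)`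
for all `n ≥ 0`. -/
theorem recursive_sequence_bound (a : ℕ → ℝ) (h0 : a 0 = 2)
    (hrec : ∀ n, a (n + 1) = -2 + Real.sqrt (9 + 6 * (a n - 1))) :
    ∀ n, a n ≤ 1 + 7 / (n + 7) := by
  intro n
  induction n with
  | zero => norm_num [h0]
  | succ n ih =>
    have hstep : √(9 + 6 * (a n - 1)) ≤ √(9 + 6 * (7 / (n + 7))) :=
      sqrt_le_sqrt (by linarith)
    have hkey := sqrt_nine_add_le (x := n) (by linarith [(Nat.cast_nonneg n : (0 : ℝ) ≤ n)])
    rw [hrec]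
    push_cast
    rw [show (n : ℝ) + 1 + 7 = n + 8 by ring]
    linarith
end
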